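/- Let n ≥ 1 and D ≥ 3 be integers, k a real number, and set β_p = −2^p·(p−1)·binom(n,p)·(D(D−1)/(D−2))^p for 0 ≤ p ≤ n. For α > 0 and v, w ∈ ℝ define Γ₁(α,v,w) = (D−2)·(k + v² − α·w)/(D·α²), Σ₁(α,v,w) = (D−1)·((D−2)(k + v²) + 2α·w)/α², and L(α,v,w) = α^{D−1}·Σ_{p=0}^n β_p·Γ₁(α,v,w)^p·Σ₁(α,v,w)^{n−p}. Let a : ℝ → ℝ be four times differentiable with a(t) > 0 for all t, set F_n(t) = (D−2n)·(D(D−1)(k + ȧ(t)²)/a(t)²)^n, and define the Euler–Lagrange expression E(t) = (∂L/∂α)(a(t),ȧ(t),ä(t)) − (d/dt)[ s ↦ (∂L/∂v)(a(s),ȧ(s),ä(s)) ](t) + (d²/dt²)[ s ↦ (∂L/∂w)(a(s),ȧ(s),ä(s)) ](t). Then for every t: ȧ(t)·E(t) = (a(t)^{D−1}/D)·(d/dt)F_n(t) + ((D−1)/D)·a(t)^{D−2}·ȧ(t)·F_n(t). -/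

import Mathlib

/-!
On FLRW backgrounds the binomial sum collapses, and the reduced Lagrangian becomes affine in the
acceleration: `L = A(a, ȧ) + B(a, ȧ) ä` with `A = a^{D-1} F_n / D`. The two coefficients satisfy
`∂_v A = v ∂_x B`, which says that the `ȧ`-momentum `∂_v L` is the time derivative of the
`ä`-momentum `∂_w L = B`. The higher-derivative terms of the Euler–Lagrange expression therefore
cancel, leaving `E = ∂_x L`, and the same relation gives `ȧ ∂_x L = dA/dt`.
-/

open Finset Filter Topology

noncomputable def eulerLagrange (L : ℝ → ℝ → ℝ → ℝ) (a : ℝ → ℝ) (t : ℝ) : ℝ :=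
  deriv (fun x => L x (deriv a t) (deriv (deriv a) t)) (a t)
    - deriv (fun s => deriv (fun v => L (a s) v (deriv (deriv a) s)) (deriv a s)) t
    + deriv (deriv (fun s => deriv (fun w => L (a s) (deriv a s) w) (deriv (deriv a) s))) t

theorem eulerLagrange_eq_of_hasDerivAt {L : ℝ → ℝ → ℝ → ℝ} {a : ℝ → ℝ}
    (h : ∀ s, HasDerivAt (fun s => deriv (fun w => L (a s) (deriv a s) w) (deriv (deriv a) s))
      (deriv (fun v => L (a s) v (deriv (deriv a) s)) (deriv a s)) s) (t : ℝ) :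
    eulerLagrange L a t = deriv (fun x => L x (deriv a t) (deriv (deriv a) t)) (a t) := by
  rw [eulerLagrange, funext fun s => (h s).deriv, sub_add_cancel]

theorem eulerLagrange_congr {L L' : ℝ → ℝ → ℝ → ℝ} {a : ℝ → ℝ}
    (hL : ∀ x, 0 < x → ∀ v w, L x v w = L' x v w) (ha : ∀ t, 0 < a t) (t : ℝ) :
    eulerLagrange L a t = eulerLagrange L' a t := by
  have hs : ∀ s, L (a s) = L' (a s) := fun s => funext fun v => funext (hL _ (ha s) v)
  have hx : (fun x => L x (deriv a t) (deriv (deriv a) t)) =ᶠ[𝓝 (a t)]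
      fun x => L' x (deriv a t) (deriv (deriv a) t) :=
    eventually_of_mem (Ioi_mem_nhds (ha t)) fun x hx => hL x hx _ _
  simp only [eulerLagrange, hs, hx.deriv_eq]

def affineLagrangian (f g h j : ℝ → ℝ) (x v w : ℝ) : ℝ := f x * g v + h x * j v * w

theorem mul_eulerLagrange_affineLagrangian {f g h j a : ℝ → ℝ}
    (ha : Differentiable ℝ a) (ha' : Differentiable ℝ (deriv a))
    (hf : ∀ t, DifferentiableAt ℝ f (a t)) (hh : ∀ t, DifferentiableAt ℝ h (a t))
    (hg : Differentiable ℝ g) (hj : Differentiable ℝ j)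
    (hfh : ∀ t, f (a t) * deriv g (deriv a t) = deriv a t * deriv h (a t) * j (deriv a t))
    (t : ℝ) :
    deriv a t * eulerLagrange (affineLagrangian f g h j) a t
      = deriv (fun s => f (a s) * g (deriv a s)) t := by
  have hw : ∀ x v w, deriv (fun w => affineLagrangian f g h j x v w) w = h x * j v := fun x v w =>
    (((hasDerivAt_id w).const_mul (h x * j v)).const_add (f x * g v)).deriv.trans (mul_one _)
  have hv : ∀ x v w, deriv (fun v => affineLagrangian f g h j x v w) v
      = f x * deriv g v + h x * deriv j v * w := fun x v w =>
    ((((hg v).hasDerivAt.const_mul (f x)).add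
      (((hj v).hasDerivAt.const_mul (h x)).mul_const w))).deriv
  have hx : deriv (fun x => affineLagrangian f g h j x (deriv a t) (deriv (deriv a) t)) (a t)
      = deriv f (a t) * g (deriv a t) + deriv h (a t) * j (deriv a t) * deriv (deriv a) t :=
    (((hf t).hasDerivAt.mul_const _).add (((hh t).hasDerivAt.mul_const _).mul_const _)).deriv
  have hA : HasDerivAt (fun s => f (a s) * g (deriv a s))
      (deriv f (a t) * deriv a t * g (deriv a t)
        + f (a t) * (deriv g (deriv a t) * deriv (deriv a) t)) t :=
    ((hf t).hasDerivAt.comp t (ha t).hasDerivAt).mul ((hg _).hasDerivAt.comp t (ha' t).hasDerivAt)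
  rw [eulerLagrange_eq_of_hasDerivAt, hx, hA.deriv]
  · linear_combination -deriv (deriv a) t * hfh t
  · intro s
    simp only [hw, hv]
    have hB : HasDerivAt (fun s => h (a s) * j (deriv a s))
        (deriv h (a s) * deriv a s * j (deriv a s)
          + h (a s) * (deriv j (deriv a s) * deriv (deriv a) s)) s :=
      ((hh s).hasDerivAt.comp s (ha s).hasDerivAt).mul ((hj _).hasDerivAt.comp s (ha' s).hasDerivAt)
    exact hB.congr_deriv (by rw [hfh]; ring)

theorem sum_range_natCast_mul_choose_mul_pow {R : Type*} [CommSemiring R] (X Y : R) (n : ℕ) :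
    ∑ p ∈ range (n + 1), (p : R) * n.choose p * X ^ p * Y ^ (n - p)
      = n * X * (X + Y) ^ (n - 1) := by
  cases n with
  | zero => simp
  | succ m =>
    rw [sum_range_succ', add_pow, mul_sum]
    simp only [Nat.cast_zero, zero_mul, add_zero, Nat.succ_sub_succ, Nat.sub_zero]
    refine sum_congr rfl fun i _ => ?_
    have h := congrArg (Nat.cast : ℕ → R) (Nat.add_one_mul_choose_eq m i)
    push_cast at h
    calc ((i + 1 : ℕ) : R) * (m + 1).choose (i + 1) * X ^ (i + 1) * Y ^ (m - i)
        = ((m + 1).choose (i + 1) * ((i : R) + 1)) * (X * (X ^ i * Y ^ (m - i))) := by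
          push_cast; ring
      _ = ((m + 1) * m.choose i) * (X * (X ^ i * Y ^ (m - i))) := by rw [h]
      _ = _ := by push_cast; ring

theorem sum_range_one_sub_natCast_mul_choose_mul_pow {R : Type*} [CommRing R] (X Y : R) (n : ℕ) :
    ∑ p ∈ range (n + 1), (1 - (p : R)) * n.choose p * X ^ p * Y ^ (n - p)
      = (X + Y) ^ n - n * X * (X + Y) ^ (n - 1) := by
  simp only [sub_mul, one_mul, sum_sub_distrib, sum_range_natCast_mul_choose_mul_pow, add_pow]
  congr 1
  exact sum_congr rfl fun p _ => by ring

theorem zpow_natCast_sub_one_sub_two_mul {x : ℝ} (hx : x ≠ 0) {D : ℕ} (hD : 1 ≤ D) (n : ℕ) :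
    x ^ ((D : ℤ) - 1 - 2 * n) = x ^ (D - 1) / (x ^ 2) ^ n := by
  rw [zpow_sub₀ hx, ← Nat.cast_pred hD, ← pow_mul]
  norm_cast

theorem cosmological_binomial_sum_eq (n : ℕ) {d : ℝ} (hd : d ≠ 0) (hd2 : d - 2 ≠ 0) {x : ℝ}
    (hx : x ≠ 0) (k v w : ℝ) :
    ∑ p ∈ range (n + 1), -(2 : ℝ) ^ p * ((p : ℝ) - 1) * n.choose p
        * (d * (d - 1) / (d - 2)) ^ p
        * ((d - 2) * (k + v ^ 2 - x * w) / (d * x ^ 2)) ^ p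
        * ((d - 1) * ((d - 2) * (k + v ^ 2) + 2 * x * w) / x ^ 2) ^ (n - p)
      = (d * (d - 1) * (k + v ^ 2) / x ^ 2) ^ n
        - n * (2 * (d - 1) * (k + v ^ 2 - x * w) / x ^ 2)
          * (d * (d - 1) * (k + v ^ 2) / x ^ 2) ^ (n - 1) := by
  have hX : 2 * (d * (d - 1) / (d - 2)) * ((d - 2) * (k + v ^ 2 - x * w) / (d * x ^ 2))
      = 2 * (d - 1) * (k + v ^ 2 - x * w) / x ^ 2 := by
    field_simp
  have hXY : 2 * (d - 1) * (k + v ^ 2 - x * w) / x ^ 2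
      + (d - 1) * ((d - 2) * (k + v ^ 2) + 2 * x * w) / x ^ 2
      = d * (d - 1) * (k + v ^ 2) / x ^ 2 := by
    field_simp
    ring
  rw [← hXY, ← sum_range_one_sub_natCast_mul_choose_mul_pow, ← hX]
  refine sum_congr rfl fun p _ => ?_
  rw [mul_pow, mul_pow]
  ring

theorem cosmologicalLagrangian_eq_affineLagrangian (n D : ℕ) (hD1 : 1 ≤ D) (hD2 : D ≠ 2)
    {x : ℝ} (hx : x ≠ 0) (k v w : ℝ) :
    x ^ (D - 1) * ∑ p ∈ range (n + 1), -(2 : ℝ) ^ p * ((p : ℝ) - 1) * n.choose p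
        * ((D : ℝ) * (D - 1) / (D - 2)) ^ p
        * (((D : ℝ) - 2) * (k + v ^ 2 - x * w) / (D * x ^ 2)) ^ p
        * (((D : ℝ) - 1) * ((D - 2) * (k + v ^ 2) + 2 * x * w) / x ^ 2) ^ (n - p)
      = affineLagrangian (fun x => x ^ ((D : ℤ) - 1 - 2 * n))
          (fun v => ((D : ℝ) - 2 * n) / D * (D * (D - 1) * (k + v ^ 2)) ^ n)
          (fun x => x ^ ((D : ℤ) - 2 * n))
          (fun v => 2 * n * ((D : ℝ) - 1) * (D * (D - 1) * (k + v ^ 2)) ^ (n - 1)) x v w := by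
  have hd : (D : ℝ) ≠ 0 := by positivity
  have hd2 : (D : ℝ) - 2 ≠ 0 := sub_ne_zero.mpr (by exact_mod_cast hD2)
  have hpow₂ : x ^ ((D : ℤ) - 2 * n) = x ^ (D - 1) * x / (x ^ 2) ^ n := by
    rw [zpow_sub₀ hx, ← pow_succ, Nat.sub_add_cancel hD1, ← pow_mul]
    norm_cast
  rw [affineLagrangian, cosmological_binomial_sum_eq n hd hd2 hx,
    zpow_natCast_sub_one_sub_two_mul hx hD1, hpow₂]
  simp only [div_pow]
  rcases n with _ | m
  · simp [hd]
  · rw [pow_succ (x ^ 2)]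
    field_simp
    push_cast
    ring

theorem cosmological_momentum_balance (n D : ℕ) (hD : (D : ℝ) ≠ 0) (k x v : ℝ) :
    x ^ ((D : ℤ) - 1 - 2 * n)
        * deriv (fun v => ((D : ℝ) - 2 * n) / D * (D * (D - 1) * (k + v ^ 2)) ^ n) v
      = v * deriv (fun x => x ^ ((D : ℤ) - 2 * n)) x
        * (2 * n * ((D : ℝ) - 1) * (D * (D - 1) * (k + v ^ 2)) ^ (n - 1)) := by
  have hg : HasDerivAt (fun v => ((D : ℝ) - 2 * n) / D * (D * (D - 1) * (k + v ^ 2)) ^ n)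
      (((D : ℝ) - 2 * n) / D
        * (n * (D * (D - 1) * (k + v ^ 2)) ^ (n - 1) * (D * (D - 1) * (2 * v)))) v :=
    (((((hasDerivAt_pow 2 v).const_add k).const_mul _).pow n).const_mul _).congr_deriv
      (by norm_num)
  rw [hg.deriv, deriv_zpow, show (D : ℤ) - 2 * n - 1 = D - 1 - 2 * n by ring]
  push_cast
  field_simp

theorem stmt_12 (n D : ℕ) (hD : 3 ≤ D) (k : ℝ)
    (a : ℝ → ℝ) (ha : ∀ t, 0 < a t)
    (h1 : Differentiable ℝ a) (h2 : Differentiable ℝ (deriv a)) :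
    let β : ℕ → ℝ := fun p =>
      -(2 : ℝ) ^ p * ((p : ℝ) - 1) * (n.choose p : ℝ) *
        ((D : ℝ) * ((D : ℝ) - 1) / ((D : ℝ) - 2)) ^ p
    let G1 : ℝ → ℝ → ℝ → ℝ := fun x v w =>
      ((D : ℝ) - 2) * (k + v ^ 2 - x * w) / ((D : ℝ) * x ^ 2)
    let S1 : ℝ → ℝ → ℝ → ℝ := fun x v w =>
      ((D : ℝ) - 1) * (((D : ℝ) - 2) * (k + v ^ 2) + 2 * x * w) / x ^ 2
    let L : ℝ → ℝ → ℝ → ℝ := fun x v w =>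
      x ^ (D - 1) * ∑ p ∈ Finset.range (n + 1), β p * G1 x v w ^ p * S1 x v w ^ (n - p)
    let Fn : ℝ → ℝ := fun t =>
      ((D : ℝ) - 2 * (n : ℝ)) *
        ((D : ℝ) * ((D : ℝ) - 1) * (k + (deriv a t) ^ 2) / (a t) ^ 2) ^ n
    let E : ℝ → ℝ := fun t =>
      deriv (fun x => L x (deriv a t) (deriv (deriv a) t)) (a t)
        - deriv (fun s => deriv (fun v => L (a s) v (deriv (deriv a) s)) (deriv a s)) t
        + deriv (deriv (fun s =>
            deriv (fun w => L (a s) (deriv a s) w) (deriv (deriv a) s))) t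
    ∀ t : ℝ,
      deriv a t * E t
        = a t ^ (D - 1) / (D : ℝ) * deriv Fn t
          + ((D : ℝ) - 1) / (D : ℝ) * a t ^ (D - 2) * deriv a t * Fn t := by
  intro β G1 S1 L Fn E t
  have hD1 : 1 ≤ D := by omega
  have hd : (D : ℝ) ≠ 0 := by positivity
  have hA : (fun s => a s ^ ((D : ℤ) - 1 - 2 * n)
      * (((D : ℝ) - 2 * n) / D * (D * (D - 1) * (k + deriv a s ^ 2)) ^ n))
      = fun s => a s ^ (D - 1) * Fn s / D := by
    funext s
    rw [zpow_natCast_sub_one_sub_two_mul (ha s).ne' hD1]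
    simp only [Fn, div_pow]
    field_simp
  have hFn : DifferentiableAt ℝ Fn t := by
    fun_prop (disch := exact pow_ne_zero 2 (ha t).ne')
  have hderiv : HasDerivAt (fun s => a s ^ (D - 1) * Fn s / D)
      (((D - 1 : ℕ) * a t ^ (D - 1 - 1) * deriv a t * Fn t + a t ^ (D - 1) * deriv Fn t) / D) t :=
    (((h1 t).hasDerivAt.pow (D - 1)).mul hFn.hasDerivAt).div_const (D : ℝ)
  change deriv a t * eulerLagrange L a t = _
  rw [eulerLagrange_congr (fun x hx v w =>
      cosmologicalLagrangian_eq_affineLagrangian n D hD1 (by omega) hx.ne' k v w) ha,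
    mul_eulerLagrange_affineLagrangian h1 h2
      (fun t => differentiableAt_zpow.mpr (Or.inl (ha t).ne'))
      (fun t => differentiableAt_zpow.mpr (Or.inl (ha t).ne')) (by fun_prop) (by fun_prop)
      (fun t => cosmological_momentum_balance n D hd k _ _), hA, hderiv.deriv, Nat.cast_sub hD1,
    show D - 1 - 1 = D - 2 by omega]
  push_cast
  ring
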